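/- arXiv:2402.13624 — 2 statements merged into one kernel-verified Lean document; each statement's English description precedes it below -/
import Mathlib

section
/- Let D = (A,B,λ) be an extremally matched temporal bi-clique with injective labeling λ. Then for every edge e ∈ A⊗B, |In(e) ∩ A| = |In(e) ∩ B| and |Out(e) ∩ A| = |Out(e) ∩ B|. -/
/-!
Formalization framework for temporal graphs, temporal paths, spanners,
bi-spanners, and related notions from the paper on temporal spanners of
temporal cliques and bi-cliques.

A temporal graph on vertex type `V` is given by a labeling `lab : Sym2 V → L`
(only values on actual edges matter) together with an edge set
`E : Set (Sym2 V)`.  A temporal path is a nonempty list of vertices whose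
consecutive pairs are edges of the allowed edge set and whose labels are
non-decreasing along the path (non-strict temporal path).
-/

namespace TS

variable {V : Type} {L : Type} [LinearOrder L]

/-- The list of (undirected) edges traversed by a list of vertices. -/
def pathEdges (p : List V) : List (Sym2 V) :=
  (p.zip p.tail).map fun q => s(q.1, q.2)

/-- `p` is a temporal path using only edges from `S`, labelled by `lab`:
nonempty, all edges in `S`, labels non-decreasing along the path. -/
def IsTemporalPath (lab : Sym2 V → L) (S : Set (Sym2 V)) (p : List V) : Prop :=
  p ≠ [] ∧ (∀ e ∈ pathEdges p, e ∈ S) ∧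
    (pathEdges p).Chain' fun e f => lab e ≤ lab f

/-- `u` reaches `v` via a temporal path contained in `S`. -/
def Reaches (lab : Sym2 V → L) (S : Set (Sym2 V)) (u v : V) : Prop :=
  ∃ p : List V, p.head? = some u ∧ p.getLast? = some v ∧ IsTemporalPath lab S p

/-- Edge set of the complete graph on `V`. -/
def cliqueEdges (V : Type) : Set (Sym2 V) := {e | ¬ e.IsDiag}

/-- Edge set `A ⊗ B` of the complete bipartite graph with parts `α` and `β`. -/
def bicliqueEdges (α β : Type) : Set (Sym2 (α ⊕ β)) :=
  {e | ∃ a b, e = s(Sum.inl a, Sum.inr b)}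

/-- `S` is a spanner of the temporal graph with edge set `E`:
`S ⊆ E` and every vertex reaches every other vertex within `S`. -/
def IsSpanner (lab : Sym2 V → L) (E S : Set (Sym2 V)) : Prop :=
  S ⊆ E ∧ ∀ u v : V, Reaches lab S u v

/-- `S` is a bi-spanner of the temporal bi-clique with parts `α`, `β`:
`S ⊆ α ⊗ β` and every `a ∈ α` reaches every `b ∈ β` within `S`. -/
def IsBiSpanner {α β : Type} (lab : Sym2 (α ⊕ β) → L) (S : Set (Sym2 (α ⊕ β))) : Prop :=
  S ⊆ bicliqueEdges α β ∧ ∀ (a : α) (b : β), Reaches lab S (Sum.inl a) (Sum.inr b)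

/-- `σ_cl n`: the minimum number `m` such that every temporal clique on `n`
vertices admits a spanner with at most `m` edges. -/
noncomputable def sigmaCl (n : ℕ) : ℕ :=
  sInf {m | ∀ lab : Sym2 (Fin n) → ℕ, ∃ S : Finset (Sym2 (Fin n)),
    IsSpanner lab (cliqueEdges (Fin n)) (↑S) ∧ S.card ≤ m}

/-- `σ_bc n`: the minimum number `m` such that every temporal bi-clique with
`n` vertices on each side admits a bi-spanner with at most `m` edges. -/
noncomputable def sigmaBc (n : ℕ) : ℕ :=
  sInf {m | ∀ lab : Sym2 (Fin n ⊕ Fin n) → ℕ, ∃ S : Finset (Sym2 (Fin n ⊕ Fin n)),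
    IsBiSpanner lab (↑S) ∧ S.card ≤ m}

/-- `In(v,t)`: vertices reaching `v` via a temporal path (in edge set `E`)
all of whose labels are at most `t`. -/
def InSet (lab : Sym2 V → L) (E : Set (Sym2 V)) (v : V) (t : L) : Set V :=
  {u | ∃ p : List V, p.head? = some u ∧ p.getLast? = some v ∧
    IsTemporalPath lab E p ∧ ∀ e ∈ pathEdges p, lab e ≤ t}

/-- `Out(v,t)`: vertices that `v` reaches via a temporal path (in edge set `E`)
all of whose labels are at least `t`. -/
def OutSet (lab : Sym2 V → L) (E : Set (Sym2 V)) (v : V) (t : L) : Set V :=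
  {w | ∃ p : List V, p.head? = some v ∧ p.getLast? = some w ∧
    IsTemporalPath lab E p ∧ ∀ e ∈ pathEdges p, t ≤ lab e}

/-- `In(e)` for the edge `e = {u,v}`. -/
def InEdge (lab : Sym2 V → L) (E : Set (Sym2 V)) (u v : V) : Set V :=
  InSet lab E u (lab s(u, v)) ∪ InSet lab E v (lab s(u, v))

/-- `Out(e)` for the edge `e = {u,v}`. -/
def OutEdge (lab : Sym2 V → L) (E : Set (Sym2 V)) (u v : V) : Set V :=
  OutSet lab E u (lab s(u, v)) ∪ OutSet lab E v (lab s(u, v))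

variable {α β : Type}

/-- In a bi-clique, `b` is the earliest neighbor `π⁻(a)` of `a ∈ A`. -/
def IsEarliestNbrA (lab : Sym2 (α ⊕ β) → L) (a : α) (b : β) : Prop :=
  ∀ b' : β, lab s(Sum.inl a, Sum.inr b) ≤ lab s(Sum.inl a, Sum.inr b')

/-- In a bi-clique, `a` is the earliest neighbor `π⁻(b)` of `b ∈ B`. -/
def IsEarliestNbrB (lab : Sym2 (α ⊕ β) → L) (b : β) (a : α) : Prop :=
  ∀ a' : α, lab s(Sum.inl a, Sum.inr b) ≤ lab s(Sum.inl a', Sum.inr b)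

/-- In a bi-clique, `b` is the latest neighbor `π⁺(a)` of `a ∈ A`. -/
def IsLatestNbrA (lab : Sym2 (α ⊕ β) → L) (a : α) (b : β) : Prop :=
  ∀ b' : β, lab s(Sum.inl a, Sum.inr b') ≤ lab s(Sum.inl a, Sum.inr b)

/-- In a bi-clique, `a` is the latest neighbor `π⁺(b)` of `b ∈ B`. -/
def IsLatestNbrB (lab : Sym2 (α ⊕ β) → L) (b : β) (a : α) : Prop :=
  ∀ a' : α, lab s(Sum.inl a', Sum.inr b) ≤ lab s(Sum.inl a, Sum.inr b)

/-- The bi-clique is extremally matched: both the set `M⁻` of earliest edges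
and the set `M⁺` of latest edges form perfect matchings, i.e. the earliest-
(resp. latest-) neighbor maps of the two sides are mutually inverse. -/
def ExtremallyMatched (lab : Sym2 (α ⊕ β) → L) : Prop :=
  (∃ (f : α → β) (g : β → α),
    (∀ a, IsEarliestNbrA lab a (f a)) ∧ (∀ b, IsEarliestNbrB lab b (g b)) ∧
    (∀ a, g (f a) = a) ∧ (∀ b, f (g b) = b)) ∧
  (∃ (f : α → β) (g : β → α),
    (∀ a, IsLatestNbrA lab a (f a)) ∧ (∀ b, IsLatestNbrB lab b (g b)) ∧
    (∀ a, g (f a) = a) ∧ (∀ b, f (g b) = b))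

/-- `a ∈ A` is dismountable: there is `a' ≠ a` with
`λ({a, π⁻(a')}) ≤ λ({a', π⁻(a')})`. -/
def DismountableA (lab : Sym2 (α ⊕ β) → L) (a : α) : Prop :=
  ∃ (a' : α) (b : β), a' ≠ a ∧ IsEarliestNbrA lab a' b ∧
    lab s(Sum.inl a, Sum.inr b) ≤ lab s(Sum.inl a', Sum.inr b)

/-- `b ∈ B` is dismountable: there is `b' ≠ b` with
`λ({b', π⁺(b')}) ≤ λ({b, π⁺(b')})`. -/
def DismountableB (lab : Sym2 (α ⊕ β) → L) (b : β) : Prop :=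
  ∃ (b' : β) (a : α), b' ≠ b ∧ IsLatestNbrB lab b' a ∧
    lab s(Sum.inl a, Sum.inr b') ≤ lab s(Sum.inl a, Sum.inr b)

/-- The edge `{a', b'}` is `e`-reverted for `e = {a,b}`:
`λ({a', b}) ≤ λ({π⁺(b'), b})` or `λ({π⁻(a'), a}) ≤ λ({b', a})`. -/
def Reverted (lab : Sym2 (α ⊕ β) → L) (a : α) (b : β) (a' : α) (b' : β) : Prop :=
  (∃ a'' : α, IsLatestNbrB lab b' a'' ∧
    lab s(Sum.inl a', Sum.inr b) ≤ lab s(Sum.inl a'', Sum.inr b)) ∨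
  (∃ b'' : β, IsEarliestNbrA lab a' b'' ∧
    lab s(Sum.inl a, Sum.inr b'') ≤ lab s(Sum.inl a, Sum.inr b'))

/-- `M(e)`: the set of edges of the bi-clique that are *not* `e`-reverted,
for `e = {a,b}`. -/
def MSet (lab : Sym2 (α ⊕ β) → L) (a : α) (b : β) : Set (Sym2 (α ⊕ β)) :=
  {e | ∃ (a' : α) (b' : β), e = s(Sum.inl a', Sum.inr b') ∧ ¬ Reverted lab a b a' b'}

/-- `ind_{a}({a,b})`: the (1-based) rank of the edge `{a,b}` among the edges
incident to `a ∈ A`, ordered increasingly by label. -/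
def indA [Fintype β] (lab : Sym2 (α ⊕ β) → ℕ) (a : α) (b : β) : ℕ :=
  (Finset.univ.filter fun b' : β =>
    lab s(Sum.inl a, Sum.inr b') ≤ lab s(Sum.inl a, Sum.inr b)).card

/-- `ind_{b}({a,b})`: the (1-based) rank of the edge `{a,b}` among the edges
incident to `b ∈ B`, ordered increasingly by label. -/
def indB [Fintype α] (lab : Sym2 (α ⊕ β) → ℕ) (a : α) (b : β) : ℕ :=
  (Finset.univ.filter fun a' : α =>
    lab s(Sum.inl a', Sum.inr b) ≤ lab s(Sum.inl a, Sum.inr b)).card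

/-- Underlying symmetric label function of the shifted matching graph `SM_n`:
the edge `{a_i, b_j}` gets label `(j - i) mod n`. -/
def smFun (n : ℕ) : (Fin n ⊕ Fin n) → (Fin n ⊕ Fin n) → ℕ
  | Sum.inl i, Sum.inr j => (n + (j : ℕ) - (i : ℕ)) % n
  | Sum.inr j, Sum.inl i => (n + (j : ℕ) - (i : ℕ)) % n
  | _, _ => 0

theorem smFun_symm (n : ℕ) : ∀ x y, smFun n x y = smFun n y x := by
  rintro (i | i) (j | j) <;> rfl

/-- The labeling of the shifted matching graph `SM_n`. -/
def smLab (n : ℕ) : Sym2 (Fin n ⊕ Fin n) → ℕ :=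
  Sym2.lift ⟨smFun n, smFun_symm n⟩

end TS

/-!
The earliest-edge matching `π⁻` maps `In(e) ∩ A` into `In(e) ∩ B` and back: prepending to a
temporal path starting at `v` the earliest edge at `v` keeps it temporal, and keeps all labels
at most `λ(e)` (when the path is trivial, `v` is an endpoint of `e`, so `λ(v π⁻(v)) ≤ λ(e)`).
As `π⁻` is an involution, it is a bijection between the two sides. Reversing time (order-dual
labels, reversed paths) turns `Out` into `In` and `π⁺` into `π⁻`.
-/

namespace TS

open OrderDual

section TemporalPaths

variable {V : Type} {L : Type} [LinearOrder L]

@[simp]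
theorem pathEdges_singleton (x : V) : pathEdges [x] = [] := rfl

@[simp]
theorem pathEdges_cons_cons (x y : V) (l : List V) :
    pathEdges (x :: y :: l) = s(x, y) :: pathEdges (y :: l) := rfl

theorem pathEdges_concat :
    ∀ (l : List V) (x : V), pathEdges (l ++ [x]) = pathEdges l ++ (l.getLast?.map (s(·, x))).toList
  | [], _ => rfl
  | [_], _ => rfl
  | y :: z :: l, x => by simpa using pathEdges_concat (z :: l) x

theorem pathEdges_reverse : ∀ p : List V, pathEdges p.reverse = (pathEdges p).reverse
  | [] => rfl
  | [_] => rfl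
  | x :: y :: l => by
    rw [List.reverse_cons, pathEdges_concat, pathEdges_reverse (y :: l)]
    simp [Sym2.eq_swap]

theorem isTemporalPath_reverse {lab : Sym2 V → L} {E : Set (Sym2 V)} {p : List V} :
    IsTemporalPath (toDual ∘ lab) E p.reverse ↔ IsTemporalPath lab E p := by
  simp only [IsTemporalPath, pathEdges_reverse, List.mem_reverse, ne_eq, List.reverse_eq_nil_iff]
  exact and_congr_right fun _ => and_congr_right fun _ => List.isChain_reverse

theorem OutSet_eq_InSet_toDual (lab : Sym2 V → L) (E : Set (Sym2 V)) (v : V) (t : L) :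
    OutSet lab E v t = InSet (toDual ∘ lab) E v (toDual t) := by
  ext w
  constructor
  · rintro ⟨p, hhead, hlast, hp, hle⟩
    exact ⟨p.reverse, by simpa, by simpa, isTemporalPath_reverse.2 hp,
      by simpa [pathEdges_reverse] using hle⟩
  · rintro ⟨p, hhead, hlast, hp, hle⟩
    refine ⟨p.reverse, by simpa, by simpa, ?_, by simpa [pathEdges_reverse] using hle⟩
    rwa [← isTemporalPath_reverse, List.reverse_reverse]

theorem OutEdge_eq_InEdge_toDual (lab : Sym2 V → L) (E : Set (Sym2 V)) (u v : V) :
    OutEdge lab E u v = InEdge (toDual ∘ lab) E u v := by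
  simp only [OutEdge, InEdge, OutSet_eq_InSet_toDual, Function.comp_apply]

theorem mem_InSet_of_earliest {lab : Sym2 V → L} {E : Set (Sym2 V)} {u v w : V} {t : L}
    (hv : v ∈ InSet lab E w t) (huv : s(u, v) ∈ E)
    (hmin : ∀ z, s(v, z) ∈ E → lab s(u, v) ≤ lab s(v, z)) (ht : v = w → lab s(u, v) ≤ t) :
    u ∈ InSet lab E w t := by
  obtain ⟨p, hhead, hlast, ⟨-, hE, hchain⟩, hle⟩ := hv
  obtain ⟨q, rfl⟩ : ∃ q, p = v :: q := by
    cases p with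
    | nil => simp at hhead
    | cons x q => exact ⟨q, by simpa using hhead⟩
  rcases q with _ | ⟨y, q⟩
  · have hvw : v = w := by simpa using hlast
    exact ⟨[u, v], rfl, by simpa using hlast, ⟨by simp, by simpa using huv,
      List.isChain_singleton _⟩, by simpa using ht hvw⟩
  · have hvy : s(v, y) ∈ E := hE _ (by simp)
    have huv_le := hmin y hvy
    refine ⟨u :: v :: y :: q, rfl, by simpa using hlast, ⟨by simp, ?_, ?_⟩, ?_⟩
    · simpa [huv] using hE
    · exact List.IsChain.cons_cons huv_le hchain
    · simpa [huv_le.trans (hle _ (by simp))] using hle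

theorem mem_InEdge_of_earliest {lab : Sym2 V → L} {E : Set (Sym2 V)} {x y u v : V}
    (hxy : s(x, y) ∈ E) (huv : s(u, v) ∈ E)
    (hmin : ∀ z, s(v, z) ∈ E → lab s(u, v) ≤ lab s(v, z)) (hv : v ∈ InEdge lab E x y) :
    u ∈ InEdge lab E x y := by
  rcases hv with hv | hv
  · exact .inl (mem_InSet_of_earliest hv huv hmin (by rintro rfl; exact hmin y hxy))
  · refine .inr (mem_InSet_of_earliest hv huv hmin ?_)
    rintro rfl
    rw [Sym2.eq_swap (a := x)]
    exact hmin x (by rwa [Sym2.eq_swap])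

end TemporalPaths

section Biclique

variable {α β L : Type} [LinearOrder L] {lab : Sym2 (α ⊕ β) → L}

theorem mk_mem_bicliqueEdges (a : α) (b : β) :
    s(Sum.inl a, Sum.inr b) ∈ bicliqueEdges α β :=
  ⟨a, b, rfl⟩

theorem swap_mem_bicliqueEdges (a : α) (b : β) :
    s(Sum.inr b, Sum.inl a) ∈ bicliqueEdges α β :=
  ⟨a, b, Sym2.eq_swap⟩

theorem IsEarliestNbrA.le_of_mem {a : α} {b : β} (h : IsEarliestNbrA lab a b) {z : α ⊕ β}
    (hz : s(Sum.inl a, z) ∈ bicliqueEdges α β) :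
    lab s(Sum.inr b, Sum.inl a) ≤ lab s(Sum.inl a, z) := by
  obtain ⟨a', b', hz⟩ := hz
  obtain ⟨-, rfl⟩ : a = a' ∧ z = Sum.inr b' := by simpa [Sym2.eq_iff] using hz
  rw [Sym2.eq_swap]
  exact h b'

theorem IsEarliestNbrB.le_of_mem {b : β} {a : α} (h : IsEarliestNbrB lab b a) {z : α ⊕ β}
    (hz : s(Sum.inr b, z) ∈ bicliqueEdges α β) :
    lab s(Sum.inl a, Sum.inr b) ≤ lab s(Sum.inr b, z) := by
  obtain ⟨a', b', hz⟩ := hz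
  obtain ⟨-, rfl⟩ : b = b' ∧ z = Sum.inl a' := by simpa [Sym2.eq_iff] using hz
  rw [Sym2.eq_swap (a := Sum.inr b)]
  exact h a'

theorem ncard_inter_range_inl_eq_inr {S : Set (α ⊕ β)} (e : α ≃ β)
    (he : ∀ a, Sum.inl a ∈ S ↔ Sum.inr (e a) ∈ S) :
    (S ∩ Set.range Sum.inl).ncard = (S ∩ Set.range Sum.inr).ncard := by
  have hpre : Sum.inl ⁻¹' S = e ⁻¹' (Sum.inr ⁻¹' S) := Set.ext he
  rw [← Set.image_preimage_eq_inter_range, ← Set.image_preimage_eq_inter_range,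
    Set.ncard_image_of_injective _ Sum.inl_injective,
    Set.ncard_image_of_injective _ Sum.inr_injective, hpre, ← e.image_symm_eq_preimage,
    Set.ncard_image_of_injective _ e.symm.injective]

theorem ncard_InEdge_inter_range_inl_eq_inr (e : α ≃ β)
    (hA : ∀ a, IsEarliestNbrA lab a (e a)) (hB : ∀ b, IsEarliestNbrB lab b (e.symm b))
    (a : α) (b : β) :
    (InEdge lab (bicliqueEdges α β) (Sum.inl a) (Sum.inr b) ∩ Set.range Sum.inl).ncard =
      (InEdge lab (bicliqueEdges α β) (Sum.inl a) (Sum.inr b) ∩ Set.range Sum.inr).ncard := by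
  refine ncard_inter_range_inl_eq_inr e fun a' => ⟨fun h => ?_, fun h => ?_⟩
  · exact mem_InEdge_of_earliest (mk_mem_bicliqueEdges a b) (swap_mem_bicliqueEdges a' (e a'))
      (fun _ => (hA a').le_of_mem) h
  · simpa using mem_InEdge_of_earliest (mk_mem_bicliqueEdges a b)
      (mk_mem_bicliqueEdges (e.symm (e a')) (e a'))
      (fun _ => (hB (e a')).le_of_mem) h

end Biclique

theorem stmt11_general {α β : Type}
    (lab : Sym2 (α ⊕ β) → ℕ)
    (hEM : ExtremallyMatched lab) (a : α) (b : β) :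
    (InEdge lab (bicliqueEdges α β) (Sum.inl a) (Sum.inr b) ∩ Set.range Sum.inl).ncard =
      (InEdge lab (bicliqueEdges α β) (Sum.inl a) (Sum.inr b) ∩ Set.range Sum.inr).ncard ∧
    (OutEdge lab (bicliqueEdges α β) (Sum.inl a) (Sum.inr b) ∩ Set.range Sum.inl).ncard =
      (OutEdge lab (bicliqueEdges α β) (Sum.inl a) (Sum.inr b) ∩ Set.range Sum.inr).ncard := by
  obtain ⟨⟨f, g, hf, hg, hgf, hfg⟩, ⟨F, G, hF, hG, hGF, hFG⟩⟩ := hEM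
  refine ⟨ncard_InEdge_inter_range_inl_eq_inr ⟨f, g, hgf, hfg⟩ hf hg a b, ?_⟩
  rw [OutEdge_eq_InEdge_toDual]
  -- the latest neighbours for `lab` are the earliest ones for `toDual ∘ lab`
  exact ncard_InEdge_inter_range_inl_eq_inr (lab := toDual ∘ lab) ⟨F, G, hGF, hFG⟩ hF hG a b

/-- in an extremally matched bi-clique with injective labeling,
for every edge `e = {a,b}` we have `|In(e) ∩ A| = |In(e) ∩ B|` and
`|Out(e) ∩ A| = |Out(e) ∩ B|`. -/
theorem stmt11 {α β : Type} [Fintype α] [Fintype β]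
    (lab : Sym2 (α ⊕ β) → ℕ) (hinj : Set.InjOn lab (bicliqueEdges α β))
    (hEM : ExtremallyMatched lab) (a : α) (b : β) :
    (InEdge lab (bicliqueEdges α β) (Sum.inl a) (Sum.inr b) ∩ Set.range Sum.inl).ncard =
      (InEdge lab (bicliqueEdges α β) (Sum.inl a) (Sum.inr b) ∩ Set.range Sum.inr).ncard ∧
    (OutEdge lab (bicliqueEdges α β) (Sum.inl a) (Sum.inr b) ∩ Set.range Sum.inl).ncard =
      (OutEdge lab (bicliqueEdges α β) (Sum.inl a) (Sum.inr b) ∩ Set.range Sum.inr).ncard :=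
  stmt11_general lab hEM a b

end TS
end

section
/- In the shifted matching graph SM_n, for all indices i, j ∈ {0,…,n−1}, the pivot-set of the edge {a_i, b_j} is trivial: In({a_i, b_j}) ∩ Out({a_i, b_j}) = {a_i, b_j}. -/
namespace TS

/-!
In `SM_n`, crossing the edge `{a_p, b_q}` at its time `ℓ = q - p` keeps the quantity
`φ(a_p, ℓ) = p + ℓ`, `φ(b_q, ℓ) = q` (in `ℤ/n`) unchanged, while waiting at a vertex of `A`
advances it at unit speed and waiting at a vertex of `B` does not change it. Hence along a
temporal path from time `s` to time `t` the potential grows by some `T ≤ t - s`. If `x` lies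
in `In(e) ∩ Out(e)` for `e = {a_i, b_j}` with `λ(e) = t`, this gives a round trip from `x` at
time `0` through `b_j` at time `t` back to `x` at time `n - 1`, whose total growth `T + U ≤ n - 1`
must equal that of `x` standing still, i.e. `n - 1` or `0`. So both legs are tight, `x` has
potential `j` at time `t`, and that forces `x = a_i` or `x = b_j`.
-/

theorem isTemporalPath_singleton {V L : Type} [LinearOrder L] (lab : Sym2 V → L)
    (S : Set (Sym2 V)) (v : V) : IsTemporalPath lab S [v] :=
  ⟨List.cons_ne_nil v [], by simp [pathEdges], List.isChain_nil⟩

theorem self_mem_inSet {V L : Type} [LinearOrder L] (lab : Sym2 V → L) (E : Set (Sym2 V))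
    (v : V) (t : L) : v ∈ InSet lab E v t :=
  ⟨[v], rfl, rfl, isTemporalPath_singleton lab E v, by simp [pathEdges]⟩

theorem self_mem_outSet {V L : Type} [LinearOrder L] (lab : Sym2 V → L) (E : Set (Sym2 V))
    (v : V) (t : L) : v ∈ OutSet lab E v t :=
  ⟨[v], rfl, rfl, isTemporalPath_singleton lab E v, by simp [pathEdges]⟩

@[simp]
theorem pathEdges_cons_cons_s15 {V : Type} (u w : V) (p : List V) :
    pathEdges (u :: w :: p) = s(u, w) :: pathEdges (w :: p) := by
  simp [pathEdges]

theorem ZMod.natCast_inj_of_lt {n a b : ℕ} (ha : a < n) (hb : b < n) :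
    (a : ZMod n) = b ↔ a = b := by
  rw [ZMod.natCast_eq_natCast_iff', Nat.mod_eq_of_lt ha, Nat.mod_eq_of_lt hb]

theorem smLab_lt {n : ℕ} (e : Sym2 (Fin n ⊕ Fin n)) : smLab n e < n := by
  induction e using Sym2.ind with
  | _ x y =>
    have hn : 0 < n := by rcases x with a | a <;> exact a.pos
    rcases x with a | a <;> rcases y with b | b <;>
      simp only [smLab, Sym2.lift_mk, smFun] <;> first | exact hn | exact Nat.mod_lt _ hn

theorem smLab_inl_inr_cast {n : ℕ} (a b : Fin n) :
    (smLab n s(Sum.inl a, Sum.inr b) : ZMod n) = (b : ZMod n) - (a : ZMod n) := by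
  change (((n + b - a) % n : ℕ) : ZMod n) = _
  rw [ZMod.natCast_mod, Nat.cast_sub (a.is_lt.le.trans (Nat.le_add_right n b))]
  simp

namespace ShiftedMatching

variable {n : ℕ}

def potential (n : ℕ) : Fin n ⊕ Fin n → ℕ → ZMod n
  | Sum.inl p, s => (p : ZMod n) + s
  | Sum.inr q, _ => q

theorem potential_inl_eq_inr (a b : Fin n) :
    potential n (Sum.inl a) (smLab n s(Sum.inl a, Sum.inr b)) =
      potential n (Sum.inr b) (smLab n s(Sum.inl a, Sum.inr b)) := by
  simp only [potential, smLab_inl_inr_cast, add_sub_cancel]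

theorem potential_eq_of_mem_bicliqueEdges {u w : Fin n ⊕ Fin n}
    (h : s(u, w) ∈ bicliqueEdges (Fin n) (Fin n)) :
    potential n u (smLab n s(u, w)) = potential n w (smLab n s(u, w)) := by
  obtain ⟨a, b, hab⟩ := h
  rcases Sym2.eq_iff.mp hab with ⟨rfl, rfl⟩ | ⟨rfl, rfl⟩
  · exact potential_inl_eq_inr a b
  · rw [Sym2.eq_swap]
    exact (potential_inl_eq_inr a b).symm

def Delay (n : ℕ) (u : Fin n ⊕ Fin n) (s : ℕ) (v : Fin n ⊕ Fin n) (t : ℕ) : Prop :=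
  ∃ T : ℕ, s + T ≤ t ∧ potential n u s + T = potential n v t

theorem delay_wait (v : Fin n ⊕ Fin n) {s t : ℕ} (hst : s ≤ t) : Delay n v s v t := by
  rcases v with p | q
  · refine ⟨t - s, by omega, ?_⟩
    simp only [potential, Nat.cast_sub hst]
    ring
  · exact ⟨0, by omega, by simp [potential]⟩

theorem Delay.trans {u v w : Fin n ⊕ Fin n} {s t r : ℕ} (huv : Delay n u s v t)
    (hvw : Delay n v t w r) : Delay n u s w r := by
  obtain ⟨T, hT, huv⟩ := huv
  obtain ⟨T', hT', hvw⟩ := hvw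
  refine ⟨T + T', by omega, ?_⟩
  rw [← hvw, ← huv, Nat.cast_add, add_assoc]

theorem Delay.congr_left {u u' v : Fin n ⊕ Fin n} {s t : ℕ} (h : Delay n u s v t)
    (hu : potential n u s = potential n u' s) : Delay n u' s v t := by
  rwa [Delay, ← hu]

theorem Delay.congr_right {u v v' : Fin n ⊕ Fin n} {s t : ℕ} (h : Delay n u s v t)
    (hv : potential n v t = potential n v' t) : Delay n u s v' t := by
  rwa [Delay, ← hv]

theorem delay_of_isTemporalPath {p : List (Fin n ⊕ Fin n)} {u v : Fin n ⊕ Fin n} {s t : ℕ}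
    (hst : s ≤ t) (hu : p.head? = some u) (hv : p.getLast? = some v)
    (hp : IsTemporalPath (smLab n) (bicliqueEdges (Fin n) (Fin n)) p)
    (hs : ∀ e ∈ (pathEdges p).head?, s ≤ smLab n e) (ht : ∀ e ∈ pathEdges p, smLab n e ≤ t) :
    Delay n u s v t := by
  induction p generalizing u s with
  | nil => simp at hu
  | cons u₀ p ih =>
    obtain rfl : u = u₀ := by simpa using hu.symm
    obtain ⟨-, hE, hC⟩ := hp
    cases p with
    | nil =>
      obtain rfl : u = v := by simpa using hv
      exact delay_wait u hst
    | cons w p =>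
      simp only [pathEdges_cons_cons_s15, List.mem_cons, forall_eq_or_imp, List.head?_cons,
        Option.mem_def, Option.some.injEq, forall_eq'] at hE hs ht
      rw [pathEdges_cons_cons_s15] at hC
      obtain ⟨hC₁, hC₂⟩ := List.isChain_cons.mp hC
      have hwait := delay_wait (n := n) u hs
      have hcross := potential_eq_of_mem_bicliqueEdges hE.1
      have hrest := ih ht.1 rfl (by simpa using hv)
        ⟨List.cons_ne_nil w p, hE.2, hC₂⟩ hC₁ ht.2
      exact (hwait.congr_right hcross).trans hrest

theorem delay_of_mem_inSet {x v : Fin n ⊕ Fin n} {t : ℕ}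
    (hx : x ∈ InSet (smLab n) (bicliqueEdges (Fin n) (Fin n)) v t) : Delay n x 0 v t := by
  obtain ⟨p, hx, hv, hp, ht⟩ := hx
  exact delay_of_isTemporalPath (Nat.zero_le t) hx hv hp (fun _ _ => Nat.zero_le _) ht

theorem delay_of_mem_outSet {x v : Fin n ⊕ Fin n} {t : ℕ} (htn : t ≤ n - 1)
    (hx : x ∈ OutSet (smLab n) (bicliqueEdges (Fin n) (Fin n)) v t) :
    Delay n v t x (n - 1) := by
  obtain ⟨p, hv, hx, hp, ht⟩ := hx
  exact delay_of_isTemporalPath htn hv hx hp (fun e he => ht e (List.mem_of_mem_head? he))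
    (fun e _ => Nat.le_pred_of_lt (smLab_lt e))

/-- A round trip from `x` over the whole time range `[0, n - 1]` cannot gain more potential
than standing still at `x`, so both legs are tight and `v` is passed in sync with `x`. -/
theorem potential_eq_of_delay_of_delay {x v : Fin n ⊕ Fin n} {t : ℕ} (hxv : Delay n x 0 v t)
    (hvx : Delay n v t x (n - 1)) : potential n x t = potential n v t := by
  obtain ⟨T, hT, hxv⟩ := hxv
  obtain ⟨U, hU, hvx⟩ := hvx
  have hround : potential n x 0 + ((T + U : ℕ) : ZMod n) = potential n x (n - 1) := by
    rw [← hvx, ← hxv, Nat.cast_add, add_assoc]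
  rcases x with p | q
  · have hn := p.pos
    obtain rfl : T = t := by
      have hsum : ((T + U : ℕ) : ZMod n) = (n - 1 : ℕ) := by simpa [potential] using hround
      have : T + U = n - 1 := (ZMod.natCast_inj_of_lt (by omega) (by omega)).mp hsum
      omega
    simpa [potential] using hxv
  · have hn := q.pos
    obtain rfl : T = 0 := by
      have hsum : ((T + U : ℕ) : ZMod n) = (0 : ℕ) := by simpa [potential] using hround
      have : T + U = 0 := (ZMod.natCast_inj_of_lt (by omega) hn).mp hsum
      omega
    simpa [potential] using hxv

theorem eq_or_eq_of_potential_eq {i j : Fin n} {t : ℕ} {x : Fin n ⊕ Fin n}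
    (hij : potential n (Sum.inl i) t = potential n (Sum.inr j) t)
    (hx : potential n x t = potential n (Sum.inr j) t) : x = Sum.inl i ∨ x = Sum.inr j := by
  rcases x with p | q
  · left
    have : ((p : ℕ) : ZMod n) = (i : ℕ) := add_right_cancel (hx.trans hij.symm)
    exact congrArg Sum.inl (Fin.ext ((ZMod.natCast_inj_of_lt p.isLt i.isLt).mp this))
  · right
    exact congrArg Sum.inr (Fin.ext ((ZMod.natCast_inj_of_lt q.isLt j.isLt).mp hx))

end ShiftedMatching

open ShiftedMatching

theorem stmt15_general (n : ℕ) (i j : Fin n) :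
    InEdge (smLab n) (bicliqueEdges (Fin n) (Fin n)) (Sum.inl i) (Sum.inr j) ∩
      OutEdge (smLab n) (bicliqueEdges (Fin n) (Fin n)) (Sum.inl i) (Sum.inr j) =
      {Sum.inl i, Sum.inr j} := by
  set t := smLab n s(Sum.inl i, Sum.inr j)
  have htn : t ≤ n - 1 := Nat.le_pred_of_lt (smLab_lt _)
  have hij : potential n (Sum.inl i) t = potential n (Sum.inr j) t := potential_inl_eq_inr i j
  ext x
  constructor
  · rintro ⟨hin, hout⟩
    have hxj : Delay n x 0 (Sum.inr j) t := by
      rcases hin with h | h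
      exacts [(delay_of_mem_inSet h).congr_right hij, delay_of_mem_inSet h]
    have hjx : Delay n (Sum.inr j) t x (n - 1) := by
      rcases hout with h | h
      exacts [(delay_of_mem_outSet htn h).congr_left hij, delay_of_mem_outSet htn h]
    exact eq_or_eq_of_potential_eq hij (potential_eq_of_delay_of_delay hxj hjx)
  · rintro (rfl | rfl)
    · exact ⟨.inl (self_mem_inSet ..), .inl (self_mem_outSet ..)⟩
    · exact ⟨.inr (self_mem_inSet ..), .inr (self_mem_outSet ..)⟩

/-- in the shifted matching graph `SM_n`, the pivot-set of every
edge `{a_i, b_j}` is trivial: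
`In({a_i,b_j}) ∩ Out({a_i,b_j}) = {a_i, b_j}`. -/
theorem stmt15 (n : ℕ) (hn : 0 < n) (i j : Fin n) :
    InEdge (smLab n) (bicliqueEdges (Fin n) (Fin n)) (Sum.inl i) (Sum.inr j) ∩
      OutEdge (smLab n) (bicliqueEdges (Fin n) (Fin n)) (Sum.inl i) (Sum.inr j) =
      {Sum.inl i, Sum.inr j} :=
  stmt15_general n i j

end TS
end
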